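/- arXiv:math/0206104 — 2 statements merged into one kernel-verified Lean document; each statement's English description precedes it below -/
import Mathlib

section
/- Over the real field F = ℝ, the hermitian matrix A ∈ M_3(ℝ[t]) with rows (t², 1, 0), (1, t², t), (0, −t, t²) is not congruent to any block-diagonal matrix B ⊕ C in which one block has size 1 and the other size 2 (in either order); in particular A is not congruent to any direct sum of 1×1 and 2×2 matrices. -/
open Polynomial

/-- The involution of `F[t]` fixing `F` and sending `t ↦ -t`. -/
noncomputable def pstar {F : Type*} [Field F] (p : F[X]) : F[X] := p.comp (-X)

/-- The induced involution on matrices: transpose composed with entrywise `pstar`. -/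
noncomputable def mstar {F : Type*} [Field F] {n : ℕ}
    (A : Matrix (Fin n) (Fin n) F[X]) : Matrix (Fin n) (Fin n) F[X] :=
  Matrix.of fun i j => pstar (A j i)

/-- `A` and `B` are congruent if `B = S* A S` for some `S ∈ GL_n(F[t])`. -/
def MatCongruent {F : Type*} [Field F] {n : ℕ}
    (A B : Matrix (Fin n) (Fin n) F[X]) : Prop :=
  ∃ S : Matrix (Fin n) (Fin n) F[X], IsUnit S.det ∧ B = mstar S * A * S

/-!
Suppose `B = S* A S` has a `1 × 1` block `b = B e e`, and let `v` be the `e`-th column of `S`.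
Then `b = v* A v`, and since `S* A = B S⁻¹`, `b` divides every entry of `v* A`; moreover `b ≠ 0`
because `det A ≠ 0`. Let `N` be the largest degree of an entry of `v`. As
`v* A v = t² ∑ vᵢ* vᵢ + (terms of degree ≤ 2N + 1)`, the coefficient of `t^(2N+2)` in `b` is
`±∑ (coeff_N vᵢ)²`, which is nonzero over `ℝ`. So `deg b ≥ 2N + 2`, whereas the entries of `v* A`
have degree `≤ N + 2`. If `N > 0` this forces `v* A = 0`, hence `b = (v* A) v = 0`. If `v` is
constant, comparing the coefficients of `1` and `t` in the entries of `v* A`, which are scalar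
multiples of `b = (∑ cᵢ²) t² + 2 c₀ c₁`, gives `v = 0`.
-/

section Involution

variable {F : Type*} [Field F]

lemma pstar_eq_compRingHom (p : F[X]) : pstar p = compRingHom (-X) p := rfl

lemma pstar_C (a : F) : pstar (C a) = C a := C_comp

lemma coeff_pstar (p : F[X]) (n : ℕ) : (pstar p).coeff n = (-1) ^ n * p.coeff n := by
  induction p using Polynomial.induction_on' with
  | add p q hp hq => simp only [pstar, add_comp, coeff_add] at *; rw [hp, hq]; ring
  | monomial k a =>
    have : (-X : F[X]) ^ k = C ((-1) ^ k) * X ^ k := by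
      rw [neg_eq_neg_one_mul, mul_pow, ← C_1, ← C_neg, ← C_pow]
    rw [pstar, monomial_comp, this, ← mul_assoc, ← C_mul, coeff_C_mul_X_pow, coeff_monomial]
    rcases eq_or_ne n k with rfl | h
    · simp [mul_comm]
    · simp [h, h.symm]

lemma natDegree_pstar (p : F[X]) : (pstar p).natDegree = p.natDegree := by
  simp [pstar, natDegree_comp]

lemma coeff_pstar_mul_self (p : F[X]) {N : ℕ} (h : p.natDegree ≤ N) :
    (pstar p * p).coeff (2 * N) = (-1) ^ N * p.coeff N ^ 2 := by
  rw [coeff_mul, Finset.sum_eq_single (N, N)]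
  · rw [coeff_pstar]; ring
  · rintro ⟨i, j⟩ hij hne
    rw [Finset.HasAntidiagonal.mem_antidiagonal] at hij
    rcases lt_or_gt_of_ne (fun hi : i = N => hne (by ext <;> simp <;> omega)) with hi | hi
    · rw [coeff_eq_zero_of_natDegree_lt (h.trans_lt (by omega : N < j)), mul_zero]
    · rw [coeff_eq_zero_of_natDegree_lt ((natDegree_pstar p).trans_le h |>.trans_lt hi), zero_mul]
  · simp [two_mul]

lemma det_mstar {n : ℕ} (S : Matrix (Fin n) (Fin n) F[X]) : (mstar S).det = pstar S.det := by
  have : mstar S = (S.map (compRingHom (-X))).transpose := rfl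
  rw [this, Matrix.det_transpose, ← RingHom.mapMatrix_apply, ← RingHom.map_det,
    pstar_eq_compRingHom]

lemma mstar_mul_apply {n : ℕ} (S A : Matrix (Fin n) (Fin n) F[X]) (e : Fin n) :
    (mstar S * A) e = Matrix.vecMul (fun i => pstar (S i e)) A := rfl

end Involution

section DiagonalEntry

variable {R n : Type*} [CommRing R] [Fintype n] [DecidableEq n]

lemma Matrix.apply_self_dvd_of_eq_mul {B M S : Matrix n n R} (hS : IsUnit S.det)
    (hB : B = M * S) {e : n} (hrow : ∀ j, j ≠ e → B e j = 0) (j : n) : B e e ∣ M e j := by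
  refine ⟨S⁻¹ e j, ?_⟩
  rw [show M = B * S⁻¹ by rw [hB, Matrix.mul_nonsing_inv_cancel_right _ _ hS], Matrix.mul_apply,
    Finset.sum_eq_single e (fun k _ hk => by rw [hrow k hk, zero_mul]) (by simp)]

lemma Matrix.apply_self_ne_zero_of_det_ne_zero {B : Matrix n n R} (hB : B.det ≠ 0) {e : n}
    (hrow : ∀ j, j ≠ e → B e j = 0) : B e e ≠ 0 := fun he =>
  hB <| Matrix.det_eq_zero_of_row_eq_zero e fun j => by
    rcases eq_or_ne j e with rfl | hj
    exacts [he, hrow j hj]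

end DiagonalEntry

namespace Polynomial

lemma natDegree_vecMul_le {R ι : Type*} [Semiring R] [Fintype ι] {v : ι → R[X]}
    {M : Matrix ι ι R[X]} {N d : ℕ} (hv : ∀ i, (v i).natDegree ≤ N)
    (hM : ∀ i j, (M i j).natDegree ≤ d) (j : ι) : (Matrix.vecMul v M j).natDegree ≤ N + d :=
  natDegree_sum_le_of_forall_le _ _ fun i _ => natDegree_mul_le_of_le (hv i) (hM i j)

lemma coeff_eq_zero_of_dvd_of_natDegree_le {R : Type*} [CommRing R] [IsDomain R] {b p : R[X]}
    (hdvd : b ∣ p) (hdeg : p.natDegree ≤ b.natDegree) {k : ℕ} (hk : b.coeff k = 0) :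
    p.coeff k = 0 := by
  obtain ⟨q, rfl⟩ := hdvd
  rcases eq_or_ne b 0 with rfl | hb
  · simp
  rcases eq_or_ne q 0 with rfl | hq
  · simp
  rw [natDegree_mul hb hq] at hdeg
  rw [eq_C_of_natDegree_eq_zero (by omega : q.natDegree = 0), coeff_mul_C, hk, zero_mul]

lemma sum_sq_coeff_sup_natDegree_ne_zero {ι F : Type*} [Fintype ι] [Field F] [LinearOrder F]
    [IsStrictOrderedRing F] {v : ι → F[X]} (hv : v ≠ 0) :
    ∑ i, (v i).coeff (Finset.univ.sup fun i => (v i).natDegree) ^ 2 ≠ 0 := by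
  obtain ⟨i₀, hi₀⟩ := Function.ne_iff.mp hv
  obtain ⟨i, -, hi⟩ := Finset.exists_mem_eq_sup Finset.univ ⟨i₀, Finset.mem_univ _⟩
    fun i => (v i).natDegree
  set N := Finset.univ.sup fun i => (v i).natDegree
  intro hsum
  have hcoeff : ∀ j, (v j).coeff N = 0 := fun j => pow_eq_zero_iff two_ne_zero |>.mp <|
    (Finset.sum_eq_zero_iff_of_nonneg fun j _ => sq_nonneg _).mp hsum j (Finset.mem_univ _)
  have hvi : v i = 0 := leadingCoeff_eq_zero.mp (hi ▸ hcoeff i :)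
  have hN : N = 0 := by rw [hi, hvi, natDegree_zero]
  refine hi₀ (eq_C_of_natDegree_eq_zero ?_ |>.trans ?_)
  · exact Nat.le_zero.mp (hN ▸ Finset.le_sup (f := fun i => (v i).natDegree) (Finset.mem_univ i₀))
  · rw [← hN, hcoeff, C_0]; rfl

end Polynomial

namespace RealCounterexample

open Matrix

noncomputable def A : Matrix (Fin 3) (Fin 3) ℝ[X] := !![X ^ 2, 1, 0; 1, X ^ 2, X; 0, -X, X ^ 2]

lemma natDegree_A_le (i j : Fin 3) : (A i j).natDegree ≤ 2 := by
  fin_cases i <;> fin_cases j <;> simp [A]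

lemma det_A_ne_zero : A.det ≠ 0 := by
  intro h
  have := congrArg (eval 1) h
  simp [A, det_fin_three] at this

lemma vecMul_A (v : Fin 3 → ℝ[X]) :
    vecMul (fun i => pstar (v i)) A = ![pstar (v 0) * X ^ 2 + pstar (v 1),
      pstar (v 0) + pstar (v 1) * X ^ 2 - pstar (v 2) * X,
      pstar (v 1) * X + pstar (v 2) * X ^ 2] := by
  ext j
  fin_cases j <;> simp [A, vecMul, dotProduct, Fin.sum_univ_three, sub_eq_add_neg, mul_comm]

lemma vecMul_A_dotProduct (v : Fin 3 → ℝ[X]) :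
    vecMul (fun i => pstar (v i)) A ⬝ᵥ v = X ^ 2 * ∑ i, pstar (v i) * v i
      + (pstar (v 1) * v 0 + pstar (v 0) * v 1)
      + X * (pstar (v 1) * v 2 - pstar (v 2) * v 1) := by
  rw [vecMul_A]
  simp only [dotProduct, Fin.sum_univ_three, cons_val_zero, cons_val_one, cons_val]
  ring

lemma coeff_vecMul_A_dotProduct {v : Fin 3 → ℝ[X]} {N : ℕ} (hv : ∀ i, (v i).natDegree ≤ N) :
    (vecMul (fun i => pstar (v i)) A ⬝ᵥ v).coeff (2 * N + 2) =
      (-1) ^ N * ∑ i, (v i).coeff N ^ 2 := by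
  have hpv : ∀ i, (pstar (v i)).natDegree ≤ N := fun i => (natDegree_pstar _).trans_le (hv i)
  have hmul : ∀ i j, (pstar (v i) * v j).natDegree ≤ 2 * N := fun i j => by
    simpa [two_mul] using natDegree_mul_le_of_le (hpv i) (hv j)
  have hmid : (pstar (v 1) * v 0 + pstar (v 0) * v 1).natDegree < 2 * N + 2 :=
    (natDegree_add_le_of_degree_le (hmul 1 0) (hmul 0 1)).trans_lt (by omega)
  have hlow : (X * (pstar (v 1) * v 2 - pstar (v 2) * v 1)).natDegree < 2 * N + 2 :=
    (natDegree_mul_le_of_le natDegree_X_le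
      (natDegree_sub_le_of_le (hmul 1 2) (hmul 2 1))).trans_lt (by omega)
  rw [vecMul_A_dotProduct, coeff_add, coeff_add, coeff_eq_zero_of_natDegree_lt hmid,
    coeff_eq_zero_of_natDegree_lt hlow, coeff_X_pow_mul, finsetSum_coeff, Finset.mul_sum]
  simp only [coeff_pstar_mul_self _ (hv _), add_zero]

lemma eq_zero_of_dvd_vecMul_A_of_natDegree_eq_zero {v : Fin 3 → ℝ[X]}
    (hv : ∀ i, (v i).natDegree = 0)
    (hdvd : ∀ j, vecMul (fun i => pstar (v i)) A ⬝ᵥ v ∣ vecMul (fun i => pstar (v i)) A j)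
    (hdeg : 2 ≤ (vecMul (fun i => pstar (v i)) A ⬝ᵥ v).natDegree) : v = 0 := by
  obtain ⟨c, rfl⟩ : ∃ c : Fin 3 → ℝ, v = fun i => C (c i) :=
    ⟨_, funext fun i => eq_C_of_natDegree_eq_zero (hv i)⟩
  set b := vecMul (fun i => pstar (C (c i))) A ⬝ᵥ (fun i => C (c i))
  have hb : b = C (∑ i, c i ^ 2) * X ^ 2 + C (2 * c 0 * c 1) := by
    simp only [b, vecMul_A_dotProduct, pstar_C, Fin.sum_univ_three, map_add, map_mul, map_pow,
      map_ofNat]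
    ring
  have hcoeff := fun j k => coeff_eq_zero_of_dvd_of_natDegree_le (hdvd j) (k := k)
    ((natDegree_vecMul_le (fun i => (natDegree_pstar _).trans_le (hv i).le) natDegree_A_le
      j).trans hdeg)
  simp only [vecMul_A] at hcoeff
  have hb1 : b.coeff 1 = 0 := by rw [hb, coeff_add, coeff_C_mul_X_pow, coeff_C]; simp
  have hb0 : b.coeff 0 = 2 * c 0 * c 1 := by simp [hb]
  have hc1 : c 1 = 0 := by simpa [pstar_C, coeff_X] using hcoeff 2 1 hb1
  have hc2 : c 2 = 0 := by simpa [pstar_C, coeff_X] using hcoeff 1 1 hb1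
  have hc0 : c 0 = 0 := by simpa [pstar_C, coeff_X] using hcoeff 1 0 (by rw [hb0, hc1, mul_zero])
  ext1 i
  fin_cases i <;> simp [hc0, hc1, hc2]

lemma vecMul_A_dotProduct_eq_zero_of_dvd (v : Fin 3 → ℝ[X])
    (hdvd : ∀ j, vecMul (fun i => pstar (v i)) A ⬝ᵥ v ∣ vecMul (fun i => pstar (v i)) A j) :
    vecMul (fun i => pstar (v i)) A ⬝ᵥ v = 0 := by
  by_contra hb
  set N := Finset.univ.sup fun i => (v i).natDegree
  have hvN : ∀ i, (v i).natDegree ≤ N := fun i =>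
    Finset.le_sup (f := fun i => (v i).natDegree) (Finset.mem_univ i)
  have hv : v ≠ 0 := by rintro rfl; simp at hb
  have hdeg : 2 * N + 2 ≤ (vecMul (fun i => pstar (v i)) A ⬝ᵥ v).natDegree :=
    le_natDegree_of_ne_zero <| by
      rw [coeff_vecMul_A_dotProduct hvN]
      exact mul_ne_zero (pow_ne_zero _ (by norm_num)) (sum_sq_coeff_sup_natDegree_ne_zero hv)
  rcases Nat.eq_zero_or_pos N with hN | hN
  · exact hv <| eq_zero_of_dvd_vecMul_A_of_natDegree_eq_zero
      (fun i => Nat.le_zero.mp (hN ▸ hvN i)) hdvd (by omega)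
  · have hrow : vecMul (fun i => pstar (v i)) A = 0 := funext fun j =>
      eq_zero_of_dvd_of_natDegree_lt (hdvd j) <|
        (natDegree_vecMul_le (fun i => (natDegree_pstar _).trans_le (hvN i)) natDegree_A_le
          j).trans_lt (by omega)
    exact hb (by rw [hrow, zero_dotProduct])

lemma false_of_congr_of_row_eq_zero {S B : Matrix (Fin 3) (Fin 3) ℝ[X]} (hS : IsUnit S.det)
    (hB : B = mstar S * A * S) {e : Fin 3} (hrow : ∀ j, j ≠ e → B e j = 0) : False := by
  have hdet : B.det ≠ 0 := by
    rw [hB, det_mul, det_mul, det_mstar]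
    exact mul_ne_zero (mul_ne_zero (hS.map (compRingHom (-X))).ne_zero det_A_ne_zero) hS.ne_zero
  have hBe : B e e = vecMul (fun i => pstar (S i e)) A ⬝ᵥ fun i => S i e := by rw [hB]; rfl
  refine apply_self_ne_zero_of_det_ne_zero hdet hrow ?_
  rw [hBe]
  refine vecMul_A_dotProduct_eq_zero_of_dvd _ fun j => ?_
  rw [← hBe, ← mstar_mul_apply]
  exact apply_self_dvd_of_eq_mul hS hB hrow j

end RealCounterexample

/-- Over `ℝ[t]`, the hermitian matrix with rows `(t², 1, 0)`, `(1, t², t)`,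
`(0, -t, t²)` is not congruent to any block-diagonal matrix with one block of
size `1` and one of size `2`, in either order (hence not to any direct sum of
`1×1` and `2×2` matrices). -/
theorem real_counterexample_not_decomposable :
    ¬ ∃ B : Matrix (Fin 3) (Fin 3) ℝ[X],
      MatCongruent (!![X ^ 2, 1, 0; 1, X ^ 2, X; 0, -X, X ^ 2]) B ∧
      ((B 0 1 = 0 ∧ B 0 2 = 0 ∧ B 1 0 = 0 ∧ B 2 0 = 0) ∨
       (B 0 2 = 0 ∧ B 1 2 = 0 ∧ B 2 0 = 0 ∧ B 2 1 = 0)) := by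
  rintro ⟨B, ⟨S, hS, hB⟩, ⟨h01, h02, -, -⟩ | ⟨-, -, h20, h21⟩⟩
  · refine RealCounterexample.false_of_congr_of_row_eq_zero (e := 0) hS hB fun j hj => ?_
    fin_cases j <;> simp_all
  · refine RealCounterexample.false_of_congr_of_row_eq_zero (e := 2) hS hB fun j hj => ?_
    fin_cases j <;> simp_all
end

section
/- Let A ∈ M_n(F[t]) be a nonzero hermitian or skew-hermitian matrix and let d be the monic gcd of all entries of A. Then d is homogeneous: either d* = d (d is even, i.e., d ∈ F[t²]) or d* = −d (d is odd, i.e., d ∈ tF[t²]). -/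
open Polynomial

/-- `A` and `B` are congruent if `B = S* A S` for some `S ∈ GL_n(F[t])`. -/
def PolyMatCongruent {F : Type*} [Field F] {n : ℕ}
    (A B : Matrix (Fin n) (Fin n) F[X]) : Prop :=
  ∃ S : Matrix (Fin n) (Fin n) F[X], IsUnit S.det ∧ B = mstar S * A * S

section Involution

variable {F : Type*} [Field F]

theorem pstar_dvd_pstar {a b : F[X]} (h : a ∣ b) : pstar a ∣ pstar b :=
  map_dvd (compRingHom (-X)) h

@[simp]
theorem pstar_pstar (p : F[X]) : pstar (pstar p) = p := by
  simp [pstar, comp_assoc]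

theorem leadingCoeff_pstar (p : F[X]) :
    (pstar p).leadingCoeff = (-1) ^ p.natDegree * p.leadingCoeff := by
  rw [pstar, leadingCoeff_comp (by simp)]
  simp [mul_comm]

theorem Polynomial.Monic.pstar_eq_neg_one_pow_mul {d : F[X]} (hd : d.Monic)
    (h : Associated d (pstar d)) : pstar d = (-1) ^ d.natDegree * d := by
  obtain ⟨u, hu⟩ := h
  obtain ⟨a, -, hau⟩ := Polynomial.isUnit_iff.mp u.isUnit
  rw [← hau] at hu
  have ha : a = (-1) ^ d.natDegree := by
    simpa [← hu, hd.leadingCoeff] using leadingCoeff_pstar d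
  rw [← hu, ha, mul_comm]
  simp

theorem pstar_dvd_of_forall_dvd {n : ℕ} {A : Matrix (Fin n) (Fin n) F[X]}
    (hA : mstar A = A ∨ mstar A = -A) {e : F[X]} (he : ∀ i j, e ∣ A i j) (i j : Fin n) :
    pstar e ∣ A i j := by
  have hentry : pstar (A j i) = A i j ∨ pstar (A j i) = -A i j := by
    rcases hA with h | h
    · exact Or.inl (by simpa [mstar] using congrFun (congrFun h i) j)
    · exact Or.inr (by simpa [mstar] using congrFun (congrFun h i) j)
  have hdvd := pstar_dvd_pstar (he j i)
  rcases hentry with h | h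
  · rwa [h] at hdvd
  · rwa [h, dvd_neg] at hdvd

end Involution

theorem gcd_of_hermitian_is_homogeneous_general {F : Type*} [Field F]
    (n : ℕ) (A : Matrix (Fin n) (Fin n) F[X])
    (hA : mstar A = A ∨ mstar A = -A)
    (d : F[X]) (hmonic : d.Monic)
    (hdvd : ∀ i j, d ∣ A i j)
    (hgreatest : ∀ e : F[X], (∀ i j, e ∣ A i j) → e ∣ d) :
    pstar d = d ∨ pstar d = -d := by
  have hstar_dvd : pstar d ∣ d := hgreatest _ (pstar_dvd_of_forall_dvd hA hdvd)
  have hdvd_star : d ∣ pstar d := by simpa using pstar_dvd_pstar hstar_dvd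
  rw [hmonic.pstar_eq_neg_one_pow_mul (associated_of_dvd_dvd hdvd_star hstar_dvd)]
  rcases neg_one_pow_eq_or F[X] d.natDegree with h | h <;> simp [h]

/-- The monic gcd of the entries of a nonzero hermitian or skew-hermitian
matrix over `F[t]` is homogeneous: it is either even or odd. -/
theorem gcd_of_hermitian_is_homogeneous {F : Type*} [Field F] [IsAlgClosed F]
    (h2 : (2 : F) ≠ 0) (n : ℕ) (A : Matrix (Fin n) (Fin n) F[X])
    (hA : mstar A = A ∨ mstar A = -A) (hA0 : A ≠ 0)
    (d : F[X]) (hmonic : d.Monic)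
    (hdvd : ∀ i j, d ∣ A i j)
    (hgreatest : ∀ e : F[X], (∀ i j, e ∣ A i j) → e ∣ d) :
    pstar d = d ∨ pstar d = -d :=
  gcd_of_hermitian_is_homogeneous_general n A hA d hmonic hdvd hgreatest
end
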